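/- Let λ ∈ [0,1) with λ ≠ 3/4 and let ε ∈ (0,1). Then the function e ↦ Φ(1 + e cos 2πλ, e sin 2πλ) is differentiable at e = ε with derivative equal to (1/(4π)) · 2 sin(2πλ) (K(k) − E(k)) / ((1 + ε cos 2πλ)·√(4 + 4ε cos 2πλ + ε²)), where k = √((4 + 4ε cos 2πλ)/(4 + 4ε cos 2πλ + ε²)). -/

import Mathlib

open Real MeasureTheory

/-- The solid-angle function of the unit circle `U = {(y₁,y₂,0) : y₁² + y₂² = 1} ⊂ ℝ³`,
as a function of `r = √(x₁²+x₂²)` and `x₃`: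
`Φ(r,x₃) = (1/(4π)) ∫_{−π}^{π} (r cos t − 1)/(Q(t) + x₃ √(Q(t))) dt`
where `Q(t) = 1 + r² + x₃² − 2 r cos t`. -/
noncomputable def circlePhi (r x₃ : ℝ) : ℝ :=
  (1 / (4 * π)) * ∫ t in (-π)..π,
    (r * Real.cos t - 1) /
      ((1 + r ^ 2 + x₃ ^ 2 - 2 * r * Real.cos t) +
        x₃ * Real.sqrt (1 + r ^ 2 + x₃ ^ 2 - 2 * r * Real.cos t))

/-- Complete elliptic integral of the first kind `K(k)`. -/
noncomputable def ellK (k : ℝ) : ℝ :=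
  ∫ t in (0 : ℝ)..(π / 2), (Real.sqrt (1 - k ^ 2 * Real.sin t ^ 2))⁻¹

/-- Complete elliptic integral of the second kind `E(k)`. -/
noncomputable def ellE (k : ℝ) : ℝ :=
  ∫ t in (0 : ℝ)..(π / 2), Real.sqrt (1 - k ^ 2 * Real.sin t ^ 2)

noncomputable def saQ (c x t : ℝ) : ℝ := 2*(1+x*c)*(1 - Real.cos t) + x^2
noncomputable def saDen (c s x t : ℝ) : ℝ := saQ c x t + x*s*Real.sqrt (saQ c x t)
noncomputable def saF (c s x t : ℝ) : ℝ := ((1+x*c)*Real.cos t - 1) / saDen c s x t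
noncomputable def saG (c s x t : ℝ) : ℝ := c*Real.sin t / saDen c s x t
noncomputable def saDent (c s x t : ℝ) : ℝ :=
  2*(1+x*c)*Real.sin t + x*s*(2*(1+x*c)*Real.sin t/(2*Real.sqrt (saQ c x t)))
noncomputable def saGt (c s x t : ℝ) : ℝ :=
  (c*Real.cos t * saDen c s x t - c*Real.sin t * saDent c s x t) / (saDen c s x t)^2
noncomputable def saFd (c s x t : ℝ) : ℝ :=
  s*((1-Real.cos t)/(Real.sqrt (saQ c x t))^3) - saGt c s x t

lemma saQ_ge (c s x t : ℝ) (h1 : c^2+s^2 = 1) (hx0 : 0 < x) (hx1 : x < 1) :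
    x^2 ≤ saQ c x t := by
  have hc : c^2 ≤ 1 := by nlinarith [sq_nonneg s]
  have hc1 : -1 ≤ c := by nlinarith
  have hct : Real.cos t ≤ 1 := Real.cos_le_one t
  have ha : 0 < 1 + x*c := by nlinarith
  unfold saQ
  nlinarith

lemma saQ_pos (c s x t : ℝ) (h1 : c^2+s^2 = 1) (hx0 : 0 < x) (hx1 : x < 1) :
    0 < saQ c x t := lt_of_lt_of_le (by positivity) (saQ_ge c s x t h1 hx0 hx1)

lemma sqrt_saQ_ge (c s x t : ℝ) (h1 : c^2+s^2 = 1) (hx0 : 0 < x) (hx1 : x < 1) :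
    x ≤ Real.sqrt (saQ c x t) := by
  have h := Real.sqrt_le_sqrt (saQ_ge c s x t h1 hx0 hx1)
  rwa [Real.sqrt_sq hx0.le] at h

lemma saSum_pos (c s x t : ℝ) (h1 : c^2+s^2 = 1) (hs : -1 < s)
    (hx0 : 0 < x) (hx1 : x < 1) : 0 < Real.sqrt (saQ c x t) + x*s := by
  have hw := sqrt_saQ_ge c s x t h1 hx0 hx1
  rcases le_or_gt 0 s with h | h
  · nlinarith
  · nlinarith [mul_pos hx0 (by linarith : (0:ℝ) < s+1)]

lemma saDen_pos (c s x t : ℝ) (h1 : c^2+s^2 = 1) (hs : -1 < s)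
    (hx0 : 0 < x) (hx1 : x < 1) : 0 < saDen c s x t := by
  have hq := saQ_pos c s x t h1 hx0 hx1
  have hw := sqrt_saQ_ge c s x t h1 hx0 hx1
  have hw0 : 0 < Real.sqrt (saQ c x t) := lt_of_lt_of_le hx0 hw
  have hQ : saQ c x t = Real.sqrt (saQ c x t)^2 := (Real.sq_sqrt hq.le).symm
  have hsum : 0 < Real.sqrt (saQ c x t) + x*s := by
    rcases le_or_gt 0 s with h | h
    · nlinarith
    · nlinarith [mul_pos hx0 (by linarith : (0:ℝ) < s+1)]
  unfold saDen
  nlinarith [mul_pos hw0 hsum]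

lemma hasDerivAt_saQ_t (c x t : ℝ) :
    HasDerivAt (fun u => saQ c x u) (2*(1+x*c)*Real.sin t) t := by
  have h1 : HasDerivAt (fun u : ℝ => 1 - Real.cos u) (Real.sin t) t := by
    simpa using (Real.hasDerivAt_cos t).const_sub 1
  have h2 := (h1.const_mul (2*(1+x*c))).add_const (x^2)
  unfold saQ
  convert h2 using 1

lemma hasDerivAt_saG (c s x t : ℝ) (h1 : c^2+s^2 = 1) (hs : -1 < s)
    (hx0 : 0 < x) (hx1 : x < 1) :
    HasDerivAt (fun u => saG c s x u) (saGt c s x t) t := by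
  have hq := saQ_pos c s x t h1 hx0 hx1
  have hQ := hasDerivAt_saQ_t c x t
  have hsq : HasDerivAt (fun u => Real.sqrt (saQ c x u))
      (2*(1+x*c)*Real.sin t/(2*Real.sqrt (saQ c x t))) t := hQ.sqrt hq.ne'
  have hden : HasDerivAt (fun u => saDen c s x u) (saDent c s x t) t := by
    have h2 := hsq.const_mul (x*s)
    have h3 := hQ.add h2
    unfold saDen saDent
    exact h3
  have hnum : HasDerivAt (fun u => c*Real.sin u) (c*Real.cos t) t := by
    simpa using (Real.hasDerivAt_sin t).const_mul c
  have hd := saDen_pos c s x t h1 hs hx0 hx1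
  have := hnum.div hden hd.ne'
  unfold saG saGt
  exact this

lemma hasDerivAt_saF (c s x t : ℝ) (h1 : c^2+s^2 = 1) (hs : -1 < s)
    (hx0 : 0 < x) (hx1 : x < 1) :
    HasDerivAt (fun y => saF c s y t) (saFd c s x t) x := by
  have hq := saQ_pos c s x t h1 hx0 hx1
  have hd := saDen_pos c s x t h1 hs hx0 hx1
  have hlin : HasDerivAt (fun y : ℝ => 1 + y*c) c x := by
    simpa using ((hasDerivAt_id x).mul_const c).const_add 1
  have hQx : HasDerivAt (fun y => saQ c y t) (2*c*(1-Real.cos t) + 2*x) x := by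
    have h2 : HasDerivAt (fun y : ℝ => 2*(1+y*c)*(1-Real.cos t))
        (2*c*(1-Real.cos t)) x := by
      have h3 := (hlin.const_mul 2).mul_const (1-Real.cos t)
      convert h3 using 1
    have h3 : HasDerivAt (fun y : ℝ => y^2) (2*x) x := by simpa using hasDerivAt_pow 2 x
    unfold saQ
    exact h2.add h3
  have hsqx : HasDerivAt (fun y => Real.sqrt (saQ c y t))
      ((2*c*(1-Real.cos t) + 2*x)/(2*Real.sqrt (saQ c x t))) x := hQx.sqrt hq.ne'
  have hys : HasDerivAt (fun y : ℝ => y*s) s x := by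
    simpa using (hasDerivAt_id x).mul_const s
  have hdenx : HasDerivAt (fun y => saDen c s y t)
      ((2*c*(1-Real.cos t) + 2*x) +
        (s * Real.sqrt (saQ c x t) +
          x*s*((2*c*(1-Real.cos t) + 2*x)/(2*Real.sqrt (saQ c x t))))) x := by
    have h2 := hys.mul hsqx
    have h3 := hQx.add h2
    unfold saDen
    exact h3
  have hnumx : HasDerivAt (fun y : ℝ => (1+y*c)*Real.cos t - 1) (c*Real.cos t) x := by
    have := (hlin.mul_const (Real.cos t)).sub_const 1
    convert this using 1
  have hder := hnumx.div hdenx hd.ne'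
  have key : (c*Real.cos t * saDen c s x t -
      ((1+x*c)*Real.cos t - 1) *
        ((2*c*(1-Real.cos t) + 2*x) +
          (s * Real.sqrt (saQ c x t) +
            x*s*((2*c*(1-Real.cos t) + 2*x)/(2*Real.sqrt (saQ c x t)))))) /
      (saDen c s x t)^2 = saFd c s x t := by
    have hw0 : 0 < Real.sqrt (saQ c x t) := lt_of_lt_of_le hx0 (sqrt_saQ_ge c s x t h1 hx0 hx1)
    have hS2 : Real.sin t^2 = 1 - Real.cos t^2 := by
      have := Real.sin_sq_add_cos_sq t; linarith
    have hs2 : s^2 = 1 - c^2 := by linarith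
    have hq2 : Real.sqrt (saQ c x t)^2 = saQ c x t := Real.sq_sqrt hq.le
    have hqpoly : saQ c x t = 2*(1+x*c)*(1-Real.cos t)+x^2 := rfl
    have hdne : saQ c x t + x*s*Real.sqrt (saQ c x t) ≠ 0 := by
      have := saDen_pos c s x t h1 hs hx0 hx1
      unfold saDen at this
      exact this.ne'
    have hw2 : Real.sqrt (saQ c x t)^2 = 2*(1+x*c)*(1-Real.cos t)+x^2 := by
      rw [hq2]; rfl
    have hV : 0 < Real.sqrt (saQ c x t) + x*s := saSum_pos c s x t h1 hs hx0 hx1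
    have hDenEq : saDen c s x t =
        Real.sqrt (saQ c x t) * (Real.sqrt (saQ c x t) + x*s) := by
      unfold saDen; linear_combination -hq2
    unfold saFd saGt saDent
    rw [hDenEq]
    generalize hgen : Real.sqrt (saQ c x t) = w at hw0 hV hw2
    have h2w : (2:ℝ)*w ≠ 0 := by positivity
    have hVne : w + x*s ≠ 0 := hV.ne'
    have hwne : w ≠ 0 := hw0.ne'
    have trans1 : (c * Real.cos t * (w * (w + x * s)) -
        ((1 + x * c) * Real.cos t - 1) *
          (2 * c * (1 - Real.cos t) + 2 * x + (s * w + x * s * ((2 * c * (1 - Real.cos t) + 2 * x) / (2 * w))))) /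
      (w * (w + x * s)) ^ 2
        = (2*c*Real.cos t*w^2*(w+x*s)
      - ((1+x*c)*Real.cos t - 1)*((2*c*(1-Real.cos t)+2*x)*(2*w)
        + 2*s*w^2 + x*s*(2*c*(1-Real.cos t)+2*x)))/(2*w^3*(w+x*s)^2) := by
      rw [div_eq_div_iff (by positivity) (by positivity)]
      field_simp
      ring
    have trans2 : s * ((1 - Real.cos t) / w ^ 3) -
      (c * Real.cos t * (w * (w + x * s)) -
          c * Real.sin t * (2 * (1 + x * c) * Real.sin t + x * s * (2 * (1 + x * c) * Real.sin t / (2 * w)))) /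
        (w * (w + x * s)) ^ 2
        = (2*s*(1-Real.cos t)*(w+x*s)^2
      - (2*c*Real.cos t*w^2*(w+x*s)
        - c*Real.sin t*(2*(1+x*c)*Real.sin t)*(2*w+x*s)))/(2*w^3*(w+x*s)^2) := by
      rw [eq_div_iff (by positivity)]
      have hVne' : w + s*x ≠ 0 := by rw [mul_comm]; exact hVne
      field_simp
    rw [trans1, trans2]
    congr 1
    linear_combination (4*c*Real.cos t*w + 2*x*c*s*Real.cos t)*hw2
      + (-4*x*w + 4*x*Real.cos t*w - 2*x^2*s + 2*x^2*s*Real.cos t)*hs2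
      + (-4*c*w - 2*x*c*s - 4*x*c^2*w - 2*x^2*c^2*s)*hS2
  unfold saF
  rw [← key]
  exact hder

open Set in
lemma saQ_contOn (c : ℝ) : Continuous (fun p : ℝ × ℝ => saQ c p.1 p.2) := by
  unfold saQ; fun_prop

open Set in
lemma saDen_cont (c s : ℝ) : Continuous (fun p : ℝ × ℝ => saDen c s p.1 p.2) := by
  unfold saDen
  exact (saQ_contOn c).add ((continuous_fst.mul continuous_const).mul
    ((saQ_contOn c).sqrt))

open Set in
lemma saF_contOn (c s : ℝ) (h1 : c^2+s^2 = 1) (hs : -1 < s) :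
    ContinuousOn (fun p : ℝ × ℝ => saF c s p.1 p.2) ((Ioo (0:ℝ) 1) ×ˢ univ) := by
  unfold saF
  apply ContinuousOn.div
  · fun_prop
  · exact (saDen_cont c s).continuousOn
  · rintro ⟨x, t⟩ ⟨⟨hx0, hx1⟩, -⟩
    exact (saDen_pos c s x t h1 hs hx0 hx1).ne'

open Set in
lemma saFd_contOn (c s : ℝ) (h1 : c^2+s^2 = 1) (hs : -1 < s) :
    ContinuousOn (fun p : ℝ × ℝ => saFd c s p.1 p.2) ((Ioo (0:ℝ) 1) ×ˢ univ) := by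
  have hsqne : ∀ p : ℝ × ℝ, p ∈ (Ioo (0:ℝ) 1) ×ˢ (univ : Set ℝ) →
      Real.sqrt (saQ c p.1 p.2) ≠ 0 := by
    rintro ⟨x, t⟩ ⟨⟨hx0, hx1⟩, -⟩
    exact (Real.sqrt_pos.2 (saQ_pos c s x t h1 hx0 hx1)).ne'
  have hdenne : ∀ p : ℝ × ℝ, p ∈ (Ioo (0:ℝ) 1) ×ˢ (univ : Set ℝ) →
      saDen c s p.1 p.2 ≠ 0 := by
    rintro ⟨x, t⟩ ⟨⟨hx0, hx1⟩, -⟩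
    exact (saDen_pos c s x t h1 hs hx0 hx1).ne'
  unfold saFd saGt saDent
  apply ContinuousOn.sub
  · apply ContinuousOn.mul continuousOn_const
    apply ContinuousOn.div (by fun_prop)
    · exact (((saQ_contOn c).sqrt).pow 3).continuousOn
    · intro p hp
      exact pow_ne_zero 3 (hsqne p hp)
  · apply ContinuousOn.div
    · apply ContinuousOn.sub
      · exact (by fun_prop : Continuous fun p : ℝ×ℝ =>
          c * Real.cos p.2).continuousOn.mul (saDen_cont c s).continuousOn
      · apply ContinuousOn.mul (by fun_prop)
        apply ContinuousOn.add (by fun_prop)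
        apply ContinuousOn.mul (by fun_prop : Continuous fun p : ℝ×ℝ => p.1*s).continuousOn
        apply ContinuousOn.div (by fun_prop)
        · exact (continuous_const.mul ((saQ_contOn c).sqrt)).continuousOn
        · intro p hp
          exact mul_ne_zero two_ne_zero (hsqne p hp)
    · exact ((saDen_cont c s).pow 2).continuousOn
    · intro p hp
      exact pow_ne_zero 2 (hdenne p hp)

lemma ell_integral (k : ℝ) (hk0 : 0 < k) (hk1 : k < 1) :
    ∫ u in (0:ℝ)..(π/2), Real.cos u^2 / (Real.sqrt (1 - k^2*Real.sin u^2))^3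
      = (ellK k - ellE k)/k^2 := by
  have hk2 : k^2 < 1 := by nlinarith
  have hpos : ∀ u : ℝ, 0 < 1 - k^2*Real.sin u^2 := by
    intro u
    nlinarith [Real.sin_sq_le_one u, sq_nonneg k,
      mul_nonneg (sq_nonneg k) (by nlinarith [Real.sin_sq_le_one u] : (0:ℝ) ≤ 1 - Real.sin u^2)]
  have hS : ∀ u : ℝ, 0 < Real.sqrt (1 - k^2*Real.sin u^2) :=
    fun u => Real.sqrt_pos.2 (hpos u)
  have hScont : Continuous fun u : ℝ => Real.sqrt (1 - k^2*Real.sin u^2) := by fun_prop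
  have hc1 : Continuous fun u : ℝ =>
      Real.cos u^2 / (Real.sqrt (1 - k^2*Real.sin u^2))^3 := by
    apply Continuous.div (by fun_prop) (hScont.pow 3)
    exact fun u => pow_ne_zero 3 (hS u).ne'
  have hc2 : Continuous fun u : ℝ =>
      Real.sin u^2 / Real.sqrt (1 - k^2*Real.sin u^2) := by
    apply Continuous.div (by fun_prop) hScont
    exact fun u => (hS u).ne'
  have hderiv : ∀ u : ℝ, HasDerivAt
      (fun v => Real.sin v * Real.cos v / Real.sqrt (1 - k^2*Real.sin v^2))
      (Real.cos u^2/(Real.sqrt (1-k^2*Real.sin u^2))^3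
        - Real.sin u^2/Real.sqrt (1-k^2*Real.sin u^2)) u := by
    intro u
    have hnum : HasDerivAt (fun v => Real.sin v * Real.cos v)
        (Real.cos u * Real.cos u + Real.sin u * -Real.sin u) u :=
      (Real.hasDerivAt_sin u).mul (Real.hasDerivAt_cos u)
    have h0 : HasDerivAt (fun v : ℝ => Real.sin v^2) (2*Real.sin u*Real.cos u) u := by
      have := (Real.hasDerivAt_sin u).pow 2
      refine this.congr_deriv ?_
      push_cast
      ring
    have hq : HasDerivAt (fun v : ℝ => 1 - k^2*Real.sin v^2)
        (-(k^2*(2*Real.sin u*Real.cos u))) u := by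
      have := (h0.const_mul (k^2)).const_sub 1
      convert this using 1
    have hsq := hq.sqrt (hpos u).ne'
    have hdiv := hnum.div hsq (hS u).ne'
    refine hdiv.congr_deriv (Eq.symm ?_)
    have hS2 : Real.sqrt (1 - k^2*Real.sin u^2)^2 = 1 - k^2*Real.sin u^2 :=
      Real.sq_sqrt (hpos u).le
    have hsin2 : Real.sin u^2 = 1 - Real.cos u^2 := by
      have := Real.sin_sq_add_cos_sq u; linarith
    generalize hgen : Real.sqrt (1 - k^2*Real.sin u^2) = S at hS2 ⊢
    have hSpos : 0 < S := by rw [← hgen]; exact hS u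
    field_simp
    linear_combination (-Real.cos u^2)*hS2
  have hint : ∫ u in (0:ℝ)..(π/2),
      (Real.cos u^2/(Real.sqrt (1-k^2*Real.sin u^2))^3
        - Real.sin u^2/Real.sqrt (1-k^2*Real.sin u^2)) = 0 := by
    rw [intervalIntegral.integral_eq_sub_of_hasDerivAt (fun u _ => hderiv u)
      (((hc1.sub hc2).intervalIntegrable 0 (π/2)) : IntervalIntegrable _ volume _ _)]
    simp
  have h3 : ∫ u in (0:ℝ)..(π/2), Real.cos u^2/(Real.sqrt (1-k^2*Real.sin u^2))^3
      = ∫ u in (0:ℝ)..(π/2), Real.sin u^2/Real.sqrt (1-k^2*Real.sin u^2) := by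
    have := intervalIntegral.integral_sub ((hc1.intervalIntegrable 0 (π/2)) : IntervalIntegrable _ volume _ _)
      ((hc2.intervalIntegrable 0 (π/2)) : IntervalIntegrable _ volume _ _)
    rw [hint] at this
    linarith [this]
  have hKE : ellK k - ellE k
      = k^2 * ∫ u in (0:ℝ)..(π/2), Real.sin u^2/Real.sqrt (1-k^2*Real.sin u^2) := by
    unfold ellK ellE
    rw [← intervalIntegral.integral_const_mul,
      ← intervalIntegral.integral_sub (f := fun u => (Real.sqrt (1 - k^2*Real.sin u^2))⁻¹)
        (((hScont.inv₀ (fun u => (hS u).ne')).intervalIntegrable 0 (π/2)) : IntervalIntegrable (fun u => (Real.sqrt (1 - k^2*Real.sin u^2))⁻¹) volume _ _)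
        ((hScont.intervalIntegrable 0 (π/2)) : IntervalIntegrable _ volume _ _)]
    apply intervalIntegral.integral_congr
    intro u _
    have hS2 : Real.sqrt (1 - k^2*Real.sin u^2)^2 = 1 - k^2*Real.sin u^2 :=
      Real.sq_sqrt (hpos u).le
    field_simp [(hS u).ne']
    linear_combination -hS2
  rw [h3, hKE]
  field_simp
  simp only [mul_comm (Real.sin _ ^ 2) (k ^ 2)]

lemma subst_chain (c s ε : ℝ) (h1 : c^2+s^2 = 1) (hε0 : 0 < ε) (hε1 : ε < 1) :
    ∫ t in (-π)..π, (1-Real.cos t)/(Real.sqrt (saQ c ε t))^3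
      = 8 * ∫ u in (0:ℝ)..(π/2),
          Real.cos u^2/(Real.sqrt (4*(1+ε*c)*Real.cos u^2 + ε^2))^3 := by
  set j : ℝ → ℝ := fun t => (1-Real.cos t)/(Real.sqrt (saQ c ε t))^3 with hjdef
  have hjcont : Continuous j := by
    apply Continuous.div (by fun_prop)
    · exact ((by unfold saQ; fun_prop : Continuous fun t => saQ c ε t).sqrt.pow 3)
    · intro t
      exact pow_ne_zero 3 (Real.sqrt_pos.2 (saQ_pos c s ε t h1 hε0 hε1)).ne'
  have heven : ∫ t in (-π)..(0:ℝ), j t = ∫ t in (0:ℝ)..π, j t := by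
    have h := intervalIntegral.integral_comp_neg (a := (0:ℝ)) (b := π) j
    rw [neg_zero] at h
    rw [← h]
    apply intervalIntegral.integral_congr
    intro t _
    simp only [hjdef, saQ, Real.cos_neg]
  have hsplit : ∫ t in (-π)..π, j t
      = (∫ t in (-π)..(0:ℝ), j t) + ∫ t in (0:ℝ)..π, j t :=
    (intervalIntegral.integral_add_adjacent_intervals
      ((hjcont.intervalIntegrable _ _ : IntervalIntegrable _ volume _ _))
      ((hjcont.intervalIntegrable _ _ : IntervalIntegrable _ volume _ _))).symm
  have hdouble : ∫ t in (0:ℝ)..π, j t = 2 * ∫ u in (0:ℝ)..(π/2), j (2*u) := by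
    rw [intervalIntegral.integral_comp_mul_left j (two_ne_zero)]
    rw [show (2:ℝ)*(π/2) = π by ring, show (2:ℝ)*0 = 0 by ring]
    simp [smul_eq_mul]
  have hcos2 : ∀ u : ℝ, j (2*u)
      = 2*Real.sin u^2/(Real.sqrt (4*(1+ε*c)*Real.sin u^2 + ε^2))^3 := by
    intro u
    have h2u : 1 - Real.cos (2*u) = 2*Real.sin u^2 := by
      have h := Real.sin_sq_add_cos_sq u
      rw [Real.cos_two_mul]
      nlinarith
    simp only [hjdef, saQ, h2u]
    norm_num
    congr 3
    ring
  have hflip : ∫ u in (0:ℝ)..(π/2),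
        2*Real.sin u^2/(Real.sqrt (4*(1+ε*c)*Real.sin u^2 + ε^2))^3
      = ∫ u in (0:ℝ)..(π/2),
        2*Real.cos u^2/(Real.sqrt (4*(1+ε*c)*Real.cos u^2 + ε^2))^3 := by
    have h := intervalIntegral.integral_comp_sub_left (a := 0) (b := π/2)
      (fun u => 2*Real.sin u^2/(Real.sqrt (4*(1+ε*c)*Real.sin u^2 + ε^2))^3) (π/2)
    norm_num at h
    rw [← h]
    apply intervalIntegral.integral_congr
    intro u _
    simp [Real.sin_pi_div_two_sub]
  have hpull : ∫ u in (0:ℝ)..(π/2),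
        2*Real.cos u^2/(Real.sqrt (4*(1+ε*c)*Real.cos u^2 + ε^2))^3
      = 2 * ∫ u in (0:ℝ)..(π/2),
        Real.cos u^2/(Real.sqrt (4*(1+ε*c)*Real.cos u^2 + ε^2))^3 := by
    rw [← intervalIntegral.integral_const_mul]
    apply intervalIntegral.integral_congr
    intro u _
    ring
  have hcongr2 : ∫ u in (0:ℝ)..(π/2), j (2*u)
      = ∫ u in (0:ℝ)..(π/2),
          2*Real.sin u^2/(Real.sqrt (4*(1+ε*c)*Real.sin u^2 + ε^2))^3 :=
    intervalIntegral.integral_congr (fun u _ => hcos2 u)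
  rw [hsplit, heven, hdouble, hcongr2, hflip, hpull]
  ring

open Set in
lemma saGt_contOn (c s : ℝ) (h1 : c^2+s^2 = 1) (hs : -1 < s) :
    ContinuousOn (fun p : ℝ × ℝ => saGt c s p.1 p.2) ((Ioo (0:ℝ) 1) ×ˢ univ) := by
  have h := saFd_contOn c s h1 hs
  have h2 : ContinuousOn (fun p : ℝ × ℝ =>
      s*((1-Real.cos p.2)/(Real.sqrt (saQ c p.1 p.2))^3)) ((Ioo (0:ℝ) 1) ×ˢ univ) := by
    apply ContinuousOn.mul continuousOn_const
    apply ContinuousOn.div (by fun_prop) (((saQ_contOn c).sqrt.pow 3).continuousOn)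
    rintro ⟨x, t⟩ ⟨⟨hx0, hx1⟩, -⟩
    exact pow_ne_zero 3 (Real.sqrt_pos.2 (saQ_pos c s x t h1 hx0 hx1)).ne'
  have := h2.sub h
  simpa [saFd, Pi.sub_def] using this

lemma hj_cont (c s x : ℝ) (h1 : c^2+s^2 = 1) (hx0 : 0 < x) (hx1 : x < 1) :
    Continuous fun t => (1-Real.cos t)/(Real.sqrt (saQ c x t))^3 := by
  apply Continuous.div (by fun_prop)
  · exact ((by unfold saQ; fun_prop : Continuous fun t => saQ c x t).sqrt.pow 3)
  · intro t
    exact pow_ne_zero 3 (Real.sqrt_pos.2 (saQ_pos c s x t h1 hx0 hx1)).ne'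

lemma saQ_cont_t (c x : ℝ) : Continuous fun t => saQ c x t := by
  unfold saQ; fun_prop

lemma saDen_cont_t (c s x : ℝ) : Continuous fun t => saDen c s x t := by
  unfold saDen
  exact (saQ_cont_t c x).add (continuous_const.mul (saQ_cont_t c x).sqrt)

lemma saF_cont_t (c s x : ℝ) (h1 : c^2+s^2 = 1) (hs : -1 < s)
    (hx0 : 0 < x) (hx1 : x < 1) : Continuous fun t => saF c s x t := by
  unfold saF
  exact Continuous.div (by fun_prop) (saDen_cont_t c s x)
    (fun t => (saDen_pos c s x t h1 hs hx0 hx1).ne')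

lemma saGt_cont_t (c s x : ℝ) (h1 : c^2+s^2 = 1) (hs : -1 < s)
    (hx0 : 0 < x) (hx1 : x < 1) : Continuous fun t => saGt c s x t := by
  have hsqne : ∀ t : ℝ, Real.sqrt (saQ c x t) ≠ 0 :=
    fun t => (Real.sqrt_pos.2 (saQ_pos c s x t h1 hx0 hx1)).ne'
  have hDent : Continuous fun t => saDent c s x t := by
    unfold saDent
    apply Continuous.add (by fun_prop)
    apply Continuous.mul continuous_const
    exact Continuous.div (by fun_prop)
      (continuous_const.mul (saQ_cont_t c x).sqrt)
      (fun t => mul_ne_zero two_ne_zero (hsqne t))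
  unfold saGt
  apply Continuous.div
  · exact ((continuous_const.mul Real.continuous_cos).mul (saDen_cont_t c s x)).sub
      ((continuous_const.mul Real.continuous_sin).mul hDent)
  · exact (saDen_cont_t c s x).pow 2
  · exact fun t => pow_ne_zero 2 (saDen_pos c s x t h1 hs hx0 hx1).ne'

lemma saFd_cont_t (c s x : ℝ) (h1 : c^2+s^2 = 1) (hs : -1 < s)
    (hx0 : 0 < x) (hx1 : x < 1) : Continuous fun t => saFd c s x t := by
  unfold saFd
  exact (continuous_const.mul (hj_cont c s x h1 hx0 hx1)).sub
    (saGt_cont_t c s x h1 hs hx0 hx1)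

lemma intGt_zero (c s x : ℝ) (h1 : c^2+s^2 = 1) (hs : -1 < s)
    (hx0 : 0 < x) (hx1 : x < 1) :
    ∫ t in (-π)..π, saGt c s x t = 0 := by
  rw [intervalIntegral.integral_eq_sub_of_hasDerivAt
    (fun t _ => hasDerivAt_saG c s x t h1 hs hx0 hx1)
    (((saGt_cont_t c s x h1 hs hx0 hx1).intervalIntegrable _ _ :
      IntervalIntegrable _ volume _ _))]
  simp [saG]

lemma intFd (c s x : ℝ) (h1 : c^2+s^2 = 1) (hs : -1 < s)
    (hx0 : 0 < x) (hx1 : x < 1) :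
    ∫ t in (-π)..π, saFd c s x t
      = s * ∫ t in (-π)..π, (1-Real.cos t)/(Real.sqrt (saQ c x t))^3 := by
  unfold saFd
  rw [intervalIntegral.integral_sub (f := fun t => s * ((1-Real.cos t)/(Real.sqrt (saQ c x t))^3))
      (((continuous_const.mul (hj_cont c s x h1 hx0 hx1)).intervalIntegrable _ _ :
        IntervalIntegrable _ volume _ _))
      (((saGt_cont_t c s x h1 hs hx0 hx1).intervalIntegrable _ _ :
        IntervalIntegrable _ volume _ _)),
    intGt_zero c s x h1 hs hx0 hx1, intervalIntegral.integral_const_mul]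
  ring

lemma cosform (c s ε : ℝ) (h1 : c^2+s^2 = 1) (hε0 : 0 < ε) (hε1 : ε < 1) :
    ∫ u in (0:ℝ)..(π/2), Real.cos u^2/(Real.sqrt (4*(1+ε*c)*Real.cos u^2 + ε^2))^3
      = (1/(Real.sqrt (4+4*ε*c+ε^2))^3) *
        ((ellK (Real.sqrt ((4+4*ε*c)/(4+4*ε*c+ε^2)))
          - ellE (Real.sqrt ((4+4*ε*c)/(4+4*ε*c+ε^2))))
          / ((4+4*ε*c)/(4+4*ε*c+ε^2))) := by
  have hc1 : -1 ≤ c := by nlinarith [sq_nonneg s, sq_nonneg (c+1)]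
  have ha : 0 < 1+ε*c := by nlinarith
  have hm : 0 < 4+4*ε*c+ε^2 := by nlinarith
  have hfrac0 : 0 < (4+4*ε*c)/(4+4*ε*c+ε^2) := div_pos (by nlinarith) hm
  have hfrac1 : (4+4*ε*c)/(4+4*ε*c+ε^2) < 1 := by
    rw [div_lt_one hm]; nlinarith
  set k := Real.sqrt ((4+4*ε*c)/(4+4*ε*c+ε^2)) with hkdef
  have hk2 : k^2 = (4+4*ε*c)/(4+4*ε*c+ε^2) := Real.sq_sqrt hfrac0.le
  have hk0 : 0 < k := Real.sqrt_pos.2 hfrac0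
  have hk1 : k < 1 := by nlinarith [hk2, sq_nonneg (k-1), sq_nonneg (k+1)]
  have hptwise : ∀ u : ℝ, Real.sqrt (4*(1+ε*c)*Real.cos u^2 + ε^2)
      = Real.sqrt (4+4*ε*c+ε^2) * Real.sqrt (1 - k^2*Real.sin u^2) := by
    intro u
    rw [← Real.sqrt_mul hm.le]
    congr 1
    rw [hk2]
    field_simp
    linear_combination (4+4*ε*c)*(Real.sin_sq_add_cos_sq u)
  have hsm : 0 < Real.sqrt (4+4*ε*c+ε^2) := Real.sqrt_pos.2 hm
  have hcongr : ∫ u in (0:ℝ)..(π/2),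
      Real.cos u^2/(Real.sqrt (4*(1+ε*c)*Real.cos u^2 + ε^2))^3
      = ∫ u in (0:ℝ)..(π/2), (1/(Real.sqrt (4+4*ε*c+ε^2))^3) *
          (Real.cos u^2/(Real.sqrt (1 - k^2*Real.sin u^2))^3) := by
    apply intervalIntegral.integral_congr
    intro u _
    beta_reduce
    rw [hptwise u, mul_pow]
    ring
  rw [hcongr, intervalIntegral.integral_const_mul, ell_integral k hk0 hk1, hk2]

theorem sin_ne_neg_one (lam : ℝ) (hlam : lam ∈ Set.Ico (0 : ℝ) 1)
    (hlam' : lam ≠ 3 / 4) : -1 < Real.sin (2 * π * lam) := by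
  rcases hlam with ⟨hl0, hl1⟩
  rcases lt_or_eq_of_le (Real.neg_one_le_sin (2*π*lam)) with h | h
  · exact h
  exfalso
  obtain ⟨k, hk⟩ := Real.sin_eq_neg_one_iff.mp h.symm
  have hπ := Real.pi_pos
  have h2 : 2*π*(lam - ((k:ℝ) - 1/4)) = 0 := by linear_combination -hk
  have h3 : lam = (k:ℝ) - 1/4 := by
    have h4 := mul_eq_zero.mp h2
    rcases h4 with h4 | h4
    · nlinarith
    · linarith
  have hk1 : (0:ℝ) < (k:ℝ) := by linarith
  have hk2 : (k:ℝ) < 2 := by linarith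
  have : k = 1 := by
    have l1 : 0 < k := by exact_mod_cast hk1
    have l2 : k < 2 := by exact_mod_cast hk2
    omega
  apply hlam'
  rw [h3, this]
  norm_num

/-- For `λ ∈ [0,1)`, `λ ≠ 3/4` and `ε ∈ (0,1)`, the function
`e ↦ Φ(1 + e cos 2πλ, e sin 2πλ)` is differentiable at `e = ε` with derivative
`(1/(4π)) · 2 sin(2πλ)(K(k) − E(k)) / ((1 + ε cos 2πλ)·√(4 + 4ε cos 2πλ + ε²))`,
where `k = √((4 + 4ε cos 2πλ)/(4 + 4ε cos 2πλ + ε²))`. -/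
theorem circlePhi_hasDerivAt_radial (lam : ℝ) (hlam : lam ∈ Set.Ico (0 : ℝ) 1)
    (hlam' : lam ≠ 3 / 4) (ε : ℝ) (hε : ε ∈ Set.Ioo (0 : ℝ) 1) :
    HasDerivAt
      (fun e : ℝ => circlePhi (1 + e * Real.cos (2 * π * lam)) (e * Real.sin (2 * π * lam)))
      ((1 / (4 * π)) *
        (2 * Real.sin (2 * π * lam) *
            (ellK (Real.sqrt ((4 + 4 * ε * Real.cos (2 * π * lam)) /
                (4 + 4 * ε * Real.cos (2 * π * lam) + ε ^ 2))) -
             ellE (Real.sqrt ((4 + 4 * ε * Real.cos (2 * π * lam)) /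
                (4 + 4 * ε * Real.cos (2 * π * lam) + ε ^ 2)))) /
          ((1 + ε * Real.cos (2 * π * lam)) *
            Real.sqrt (4 + 4 * ε * Real.cos (2 * π * lam) + ε ^ 2))))
      ε := by
  obtain ⟨hε0, hε1⟩ := hε
  set c := Real.cos (2 * π * lam) with hcdef
  set s := Real.sin (2 * π * lam) with hsdef
  have h1 : c^2 + s^2 = 1 := by
    rw [hcdef, hsdef]; exact Real.cos_sq_add_sin_sq _
  have hs : -1 < s := sin_ne_neg_one lam hlam hlam'
  set δ := min (ε/2) ((1-ε)/2) with hδdef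
  have hδ : 0 < δ := lt_min (by linarith) (by linarith)
  have hball : Metric.closedBall ε δ ⊆ Set.Ioo 0 1 := by
    intro y hy
    rw [Metric.mem_closedBall, Real.dist_eq, abs_le] at hy
    constructor
    · have := min_le_left (ε/2) ((1-ε)/2); have h2 := hy.1
      simp only [← hδdef] at *
      linarith
    · have := min_le_right (ε/2) ((1-ε)/2); have h2 := hy.2
      simp only [← hδdef] at *
      linarith
  have hK : IsCompact ((Metric.closedBall ε δ) ×ˢ Set.Icc (-π) π) :=
    (isCompact_closedBall ε δ).prod isCompact_Icc
  have hcontK : ContinuousOn (fun p : ℝ×ℝ => saFd c s p.1 p.2)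
      ((Metric.closedBall ε δ) ×ˢ Set.Icc (-π) π) :=
    (saFd_contOn c s h1 hs).mono (fun p hp => ⟨hball hp.1, trivial⟩)
  obtain ⟨C, hC⟩ := hK.exists_bound_of_continuousOn hcontK
  have hπ := Real.pi_pos
  have hmeas : ∀ᶠ x in nhds ε, AEStronglyMeasurable (fun t => saF c s x t)
      (volume.restrict (Set.uIoc (-π) π)) := by
    filter_upwards [Ioo_mem_nhds hε0 hε1] with x hx
    exact (saF_cont_t c s x h1 hs hx.1 hx.2).aestronglyMeasurable
  have hint : IntervalIntegrable (fun t => saF c s ε t) volume (-π) π :=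
    (saF_cont_t c s ε h1 hs hε0 hε1).intervalIntegrable _ _
  have hmeas' : AEStronglyMeasurable (fun t => saFd c s ε t)
      (volume.restrict (Set.uIoc (-π) π)) :=
    (saFd_cont_t c s ε h1 hs hε0 hε1).aestronglyMeasurable
  have hbound : ∀ᵐ t ∂(volume : Measure ℝ), t ∈ Set.uIoc (-π) π →
      ∀ x ∈ Metric.ball ε δ, ‖saFd c s x t‖ ≤ C := by
    apply Filter.Eventually.of_forall
    intro t ht x hx
    rw [Set.uIoc_of_le (by linarith : -π ≤ π)] at ht
    exact hC (x, t) ⟨Metric.ball_subset_closedBall hx, ⟨ht.1.le, ht.2⟩⟩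
  have hdiff : ∀ᵐ t ∂(volume : Measure ℝ), t ∈ Set.uIoc (-π) π →
      ∀ x ∈ Metric.ball ε δ, HasDerivAt (fun y => saF c s y t) (saFd c s x t) x := by
    apply Filter.Eventually.of_forall
    intro t _ x hx
    have hx' := hball (Metric.ball_subset_closedBall hx)
    exact hasDerivAt_saF c s x t h1 hs hx'.1 hx'.2
  have hmain := (intervalIntegral.hasDerivAt_integral_of_dominated_loc_of_deriv_le
    (Metric.ball_mem_nhds ε hδ) hmeas hint hmeas' hbound intervalIntegrable_const hdiff).2
  have hfun : ∀ e : ℝ, circlePhi (1 + e*c) (e*s)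
      = (1/(4*π)) * ∫ t in (-π)..π, saF c s e t := by
    intro e
    unfold circlePhi
    congr 1
    apply intervalIntegral.integral_congr
    intro t _
    have hQeq : 1 + (1+e*c)^2 + (e*s)^2 - 2*(1+e*c)*Real.cos t = saQ c e t := by
      unfold saQ; linear_combination (e^2)*h1
    unfold saF saDen
    beta_reduce
    rw [hQeq]
  have hval : (1/(4*π)) * ∫ t in (-π)..π, saFd c s ε t
      = (1 / (4 * π)) *
        (2 * s *
            (ellK (Real.sqrt ((4 + 4 * ε * c) / (4 + 4 * ε * c + ε ^ 2))) -
             ellE (Real.sqrt ((4 + 4 * ε * c) / (4 + 4 * ε * c + ε ^ 2)))) /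
          ((1 + ε * c) * Real.sqrt (4 + 4 * ε * c + ε ^ 2))) := by
    rw [intFd c s ε h1 hs hε0 hε1, subst_chain c s ε h1 hε0 hε1,
      cosform c s ε h1 hε0 hε1]
    have hc1 : -1 ≤ c := by nlinarith [sq_nonneg s, sq_nonneg (c+1)]
    have ha : 0 < 1+ε*c := by nlinarith
    have hm : 0 < 4+4*ε*c+ε^2 := by nlinarith
    have hsm : 0 < Real.sqrt (4+4*ε*c+ε^2) := Real.sqrt_pos.2 hm
    have hsm2 : Real.sqrt (4+4*ε*c+ε^2)^2 = 4+4*ε*c+ε^2 := Real.sq_sqrt hm.le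
    have h4a : 0 < 4+4*ε*c := by nlinarith
    set KK := ellK (Real.sqrt ((4+4*ε*c)/(4+4*ε*c+ε^2))) with hKK
    set EE := ellE (Real.sqrt ((4+4*ε*c)/(4+4*ε*c+ε^2))) with hEE
    generalize hR : Real.sqrt (4+4*ε*c+ε^2) = R at hsm hsm2 ⊢
    field_simp
    linear_combination (-8*s*(KK-EE))*hsm2
  have hres : HasDerivAt (fun e => (1/(4*π)) * ∫ t in (-π)..π, saF c s e t)
      ((1 / (4 * π)) *
        (2 * s *
            (ellK (Real.sqrt ((4 + 4 * ε * c) / (4 + 4 * ε * c + ε ^ 2))) -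
             ellE (Real.sqrt ((4 + 4 * ε * c) / (4 + 4 * ε * c + ε ^ 2)))) /
          ((1 + ε * c) * Real.sqrt (4 + 4 * ε * c + ε ^ 2)))) ε := by
    have h := hmain.const_mul (1/(4*π))
    rw [hval] at h
    exact h
  exact hres.congr_of_eventuallyEq (Filter.Eventually.of_forall hfun)
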